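/- arXiv:1612.01673 — 2 statements merged into one kernel-verified Lean document; each statement's English description precedes it below -/
import Mathlib

section
/- (Linearity) Let (X, 𝒜, μ) be a monotone measure space with μ subadditive. Then the pan-integral on real-valued functions is linear: for all measurable pan-integrable f, g : X → ℝ and all α, β ∈ ℝ, the function αf + βg is pan-integrable and ∫^pan (αf + βg) dμ = α ∫^pan f dμ + β ∫^pan g dμ. -/
open Set Filter
open scoped ENNReal NNReal Topology

variable {X : Type*}

/-- A monotone measure: vanishes on the empty set, positive on the whole space,
and monotone on measurable sets. -/
structure MonotoneMeasure [MeasurableSpace X] (mu : Set X → ℝ≥0∞) : Prop where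
  empty : mu ∅ = 0
  univ_pos : 0 < mu Set.univ
  mono : ∀ ⦃A B : Set X⦄, MeasurableSet A → MeasurableSet B → A ⊆ B → mu A ≤ mu B

/-- A finite measurable partition of `X`. -/
def IsPanPartition [MeasurableSpace X] {n : ℕ} (A : Fin n → Set X) : Prop :=
  (∀ i, MeasurableSet (A i)) ∧ Pairwise (Function.onFun Disjoint A) ∧ (⋃ i, A i) = Set.univ

/-- The `(+,·)`-based pan-integral of a nonnegative function on `X`. -/
noncomputable def panIntegral [MeasurableSpace X] (mu : Set X → ℝ≥0∞) (f : X → ℝ≥0∞) : ℝ≥0∞ :=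
  ⨆ (n : ℕ) (A : Fin n → Set X) (_ : IsPanPartition A) (lam : Fin n → ℝ≥0)
    (_ : ∀ x, ∑ i, Set.indicator (A i) (fun _ => (lam i : ℝ≥0∞)) x ≤ f x),
    ∑ i, (lam i : ℝ≥0∞) * mu (A i)

/-- The pan-integral of `f` on a set `A`, i.e. the pan-integral of `f·χ_A` on `X`. -/
noncomputable def panIntegralOn [MeasurableSpace X] (mu : Set X → ℝ≥0∞) (f : X → ℝ≥0∞)
    (A : Set X) : ℝ≥0∞ :=
  panIntegral mu (A.indicator f)

/-- Subadditivity of a set function. -/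
def PanSubadditive [MeasurableSpace X] (mu : Set X → ℝ≥0∞) : Prop :=
  ∀ ⦃A B : Set X⦄, MeasurableSet A → MeasurableSet B → mu (A ∪ B) ≤ mu A + mu B

/-- Null-additivity of a set function. -/
def PanNullAdditive [MeasurableSpace X] (mu : Set X → ℝ≥0∞) : Prop :=
  ∀ ⦃A B : Set X⦄, MeasurableSet A → MeasurableSet B → mu B = 0 → mu (A ∪ B) = mu A

/-- Continuity from below of a set function. -/
def PanContinuousFromBelow [MeasurableSpace X] (mu : Set X → ℝ≥0∞) : Prop :=
  ∀ E : ℕ → Set X, (∀ n, MeasurableSet (E n)) → Monotone E →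
    Filter.Tendsto (fun n => mu (E n)) Filter.atTop (nhds (mu (⋃ n, E n)))

/-- A real-valued function is pan-integrable if the pan-integrals of its
positive and negative parts are both finite. -/
def PanIntegrable [MeasurableSpace X] (mu : Set X → ℝ≥0∞) (f : X → ℝ) : Prop :=
  panIntegral mu (fun x => ENNReal.ofReal (f x)) < ⊤ ∧
    panIntegral mu (fun x => ENNReal.ofReal (-f x)) < ⊤

/-- The symmetric pan-integral of a real-valued function:
`∫ f⁺ dμ − ∫ f⁻ dμ`. -/
noncomputable def panIntegralReal [MeasurableSpace X] (mu : Set X → ℝ≥0∞) (f : X → ℝ) : ℝ :=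
  (panIntegral mu (fun x => ENNReal.ofReal (f x))).toReal -
    (panIntegral mu (fun x => ENNReal.ofReal (-f x))).toReal

/-- The `‖·‖_{μ,p}` functional: `(∫_E^pan |f|^p dμ)^(1/p)`. -/
noncomputable def panNorm [MeasurableSpace X] (mu : Set X → ℝ≥0∞) (E : Set X) (p : ℝ)
    (f : X → ℝ) : ℝ≥0∞ :=
  (panIntegralOn mu (fun x => ENNReal.ofReal (|f x| ^ p)) E) ^ (1 / p)


/-!
Homogeneity of the pan-integral is immediate from its definition, so everything rests on
additivity `∫ (f + g) = ∫ f + ∫ g` for nonnegative `f`, `g` with `f` measurable. For `≥`, two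
admissible simple functions below `f` and `g` are passed to their common refinement:
subadditivity of `μ` means refining a partition never decreases `∑ λᵢ μ(Aᵢ)`, and the refined
weights add up to a simple function below `f + g`. For `≤`, a cell `Aᵢ` carrying a weight
`λᵢ ≤ f + g` is cut along the grid `k λᵢ / N` of values of `f`: where
`k λᵢ / N ≤ f < (k + 1) λᵢ / N`, the weight `k λᵢ / N` lies below `f` and
`λᵢ - (k + 1) λᵢ / N` below `g`, so only `λᵢ / N` is lost, and `N → ∞` gives the bound.
The real-valued statement follows from `(u + v)⁺ + u⁻ + v⁻ = (u + v)⁻ + u⁺ + v⁺`.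
-/

structure IsMeasurablePartition [MeasurableSpace X] {ι : Type*} (A : ι → Set X) : Prop where
  measurableSet : ∀ i, MeasurableSet (A i)
  pairwise_disjoint : Pairwise (Function.onFun Disjoint A)
  iUnion_eq_univ : ⋃ i, A i = univ

namespace IsMeasurablePartition

variable [MeasurableSpace X] {ι κ : Type*} {A : ι → Set X}

lemma exists_mem (hA : IsMeasurablePartition A) (x : X) : ∃ i, x ∈ A i :=
  mem_iUnion.mp (hA.iUnion_eq_univ ▸ mem_univ x)

lemma eq_of_mem (hA : IsMeasurablePartition A) {i j : ι} {x : X} (hi : x ∈ A i)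
    (hj : x ∈ A j) : i = j :=
  hA.pairwise_disjoint.eq (not_disjoint_iff.mpr ⟨x, hi, hj⟩)

lemma sum_indicator_eq [Fintype ι] (hA : IsMeasurablePartition A) (c : ι → ℝ≥0∞) {i : ι}
    {x : X} (hx : x ∈ A i) : ∑ j, (A j).indicator (fun _ => c j) x = c i := by
  classical
  rw [Finset.sum_eq_single i (fun j _ hji => indicator_of_notMem
    (fun hxj => hji (hA.eq_of_mem hxj hx)) _) (by simp), indicator_of_mem hx]

lemma sum_indicator_le_iff [Fintype ι] (hA : IsMeasurablePartition A) (c : ι → ℝ≥0∞)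
    (f : X → ℝ≥0∞) :
    (∀ x, ∑ j, (A j).indicator (fun _ => c j) x ≤ f x) ↔ ∀ i, ∀ x ∈ A i, c i ≤ f x := by
  refine ⟨fun h i x hx => hA.sum_indicator_eq c hx ▸ h x, fun h x => ?_⟩
  obtain ⟨i, hx⟩ := hA.exists_mem x
  exact hA.sum_indicator_eq c hx ▸ h i x hx

lemma comp_equiv (hA : IsMeasurablePartition A) (e : κ ≃ ι) : IsMeasurablePartition (A ∘ e) where
  measurableSet k := hA.measurableSet (e k)
  pairwise_disjoint _ _ hkl := hA.pairwise_disjoint (e.injective.ne hkl)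
  iUnion_eq_univ := by rw [← hA.iUnion_eq_univ]; exact e.surjective.iUnion_comp A

lemma inter {B : ι → κ → Set X} (hA : IsMeasurablePartition A)
    (hB : ∀ i, IsMeasurablePartition (B i)) :
    IsMeasurablePartition (fun p : ι × κ => A p.1 ∩ B p.1 p.2) where
  measurableSet p := (hA.measurableSet p.1).inter ((hB p.1).measurableSet p.2)
  pairwise_disjoint := by
    rintro ⟨i, k⟩ ⟨j, l⟩ hne
    rcases eq_or_ne i j with rfl | hij
    · exact ((hB i).pairwise_disjoint fun hkl => hne (Prod.ext rfl hkl)).mono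
        inter_subset_right inter_subset_right
    · exact (hA.pairwise_disjoint hij).mono inter_subset_left inter_subset_left
  iUnion_eq_univ := eq_univ_of_forall fun x => by
    obtain ⟨i, hi⟩ := hA.exists_mem x
    obtain ⟨k, hk⟩ := (hB i).exists_mem x
    exact mem_iUnion.mpr ⟨(i, k), hi, hk⟩

lemma preimage_singleton [MeasurableSpace κ] [MeasurableSingletonClass κ] {L : X → κ}
    (hL : Measurable L) : IsMeasurablePartition (fun k => L ⁻¹' {k}) where
  measurableSet _ := hL (measurableSet_singleton _)
  pairwise_disjoint _ _ hkl := disjoint_singleton.mpr hkl |>.preimage L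
  iUnion_eq_univ := by rw [← preimage_iUnion, iUnion_singleton_eq_range, range_id', preimage_univ]

end IsMeasurablePartition

lemma isPanPartition_iff [MeasurableSpace X] {n : ℕ} {A : Fin n → Set X} :
    IsPanPartition A ↔ IsMeasurablePartition A :=
  ⟨fun ⟨h₁, h₂, h₃⟩ => ⟨h₁, h₂, h₃⟩, fun ⟨h₁, h₂, h₃⟩ => ⟨h₁, h₂, h₃⟩⟩

lemma PanSubadditive.measure_biUnion_finset_le [MeasurableSpace X] {mu : Set X → ℝ≥0∞}
    {κ : Type*} (hsub : PanSubadditive mu) (hempty : mu ∅ = 0) {B : κ → Set X}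
    (hB : ∀ k, MeasurableSet (B k)) (s : Finset κ) :
    mu (⋃ k ∈ s, B k) ≤ ∑ k ∈ s, mu (B k) := by
  classical
  induction s using Finset.induction with
  | empty => simp [hempty]
  | insert k s hks ih =>
    rw [Finset.set_biUnion_insert, Finset.sum_insert hks]
    exact (hsub (hB k) (s.measurableSet_biUnion fun k _ => hB k)).trans (by gcongr)

section PanValues

variable [MeasurableSpace X] {mu : Set X → ℝ≥0∞}

def panValues (mu : Set X → ℝ≥0∞) (f : X → ℝ≥0∞) : Set ℝ≥0∞ :=
  {v | ∃ (n : ℕ) (A : Fin n → Set X) (lam : Fin n → ℝ≥0), IsMeasurablePartition A ∧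
    (∀ i, ∀ x ∈ A i, (lam i : ℝ≥0∞) ≤ f x) ∧ ∑ i, (lam i : ℝ≥0∞) * mu (A i) = v}

lemma panIntegral_eq_sSup_panValues (f : X → ℝ≥0∞) :
    panIntegral mu f = sSup (panValues mu f) := by
  refine le_antisymm (iSup_le fun n => iSup₂_le fun A hA => iSup₂_le fun lam hlam => ?_) ?_
  · rw [isPanPartition_iff] at hA
    exact le_sSup ⟨n, A, lam, hA, (hA.sum_indicator_le_iff _ f).mp hlam, rfl⟩
  · refine sSup_le ?_
    rintro _ ⟨n, A, lam, hA, hlam, rfl⟩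
    exact le_iSup_of_le n <| le_iSup₂_of_le A (isPanPartition_iff.mpr hA) <|
      le_iSup₂_of_le lam ((hA.sum_indicator_le_iff _ f).mpr hlam) le_rfl

lemma sum_mem_panValues {ι : Type*} [Fintype ι] {A : ι → Set X} {lam : ι → ℝ≥0}
    {f : X → ℝ≥0∞} (hA : IsMeasurablePartition A) (hlam : ∀ i, ∀ x ∈ A i, (lam i : ℝ≥0∞) ≤ f x) :
    ∑ i, (lam i : ℝ≥0∞) * mu (A i) ∈ panValues mu f := by
  let e := (Fintype.equivFin ι).symm
  exact ⟨_, A ∘ e, lam ∘ e, hA.comp_equiv e, fun i => hlam (e i),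
    Fintype.sum_equiv e _ _ fun _ => rfl⟩

lemma panValues_nonempty (f : X → ℝ≥0∞) : (panValues mu f).Nonempty :=
  ⟨_, sum_mem_panValues (A := fun _ : Unit => univ) (lam := 0)
    ⟨fun _ => MeasurableSet.univ, Subsingleton.pairwise, iUnion_const univ⟩ (by simp)⟩

lemma sum_le_panIntegral {ι : Type*} [Fintype ι] {A : ι → Set X} {lam : ι → ℝ≥0}
    {f : X → ℝ≥0∞} (hA : IsMeasurablePartition A) (hlam : ∀ i, ∀ x ∈ A i, (lam i : ℝ≥0∞) ≤ f x) :
    ∑ i, (lam i : ℝ≥0∞) * mu (A i) ≤ panIntegral mu f :=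
  panIntegral_eq_sSup_panValues (mu := mu) f ▸ le_sSup (sum_mem_panValues hA hlam)

lemma panIntegral_mono {f g : X → ℝ≥0∞} (h : f ≤ g) : panIntegral mu f ≤ panIntegral mu g := by
  rw [panIntegral_eq_sSup_panValues f]
  refine sSup_le ?_
  rintro _ ⟨n, A, lam, hA, hlam, rfl⟩
  exact sum_le_panIntegral hA fun i x hx => (hlam i x hx).trans (h x)

lemma panIntegral_zero (hempty : mu ∅ = 0) : panIntegral mu (fun _ => 0) = 0 := by
  rw [panIntegral_eq_sSup_panValues, ← nonpos_iff_eq_zero]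
  refine sSup_le ?_
  rintro _ ⟨n, A, lam, -, hlam, rfl⟩
  refine (Finset.sum_eq_zero fun i _ => ?_).le
  rcases (A i).eq_empty_or_nonempty with hAi | ⟨x, hx⟩
  · rw [hAi, hempty, mul_zero]
  · rw [nonpos_iff_eq_zero.mp (hlam i x hx), zero_mul]

lemma le_panIntegral_const_mul (c : ℝ≥0) (f : X → ℝ≥0∞) :
    c * panIntegral mu f ≤ panIntegral mu (fun x => c * f x) := by
  rw [panIntegral_eq_sSup_panValues f, ENNReal.mul_sSup]
  refine iSup₂_le ?_
  rintro _ ⟨n, A, lam, hA, hlam, rfl⟩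
  simp_rw [Finset.mul_sum, ← mul_assoc, ← ENNReal.coe_mul]
  exact sum_le_panIntegral hA fun i x hx => by
    rw [ENNReal.coe_mul]; gcongr; exact hlam i x hx

lemma panIntegral_const_mul (hempty : mu ∅ = 0) (c : ℝ≥0) (f : X → ℝ≥0∞) :
    panIntegral mu (fun x => c * f x) = c * panIntegral mu f := by
  rcases eq_or_ne c 0 with rfl | hc
  · simpa only [ENNReal.coe_zero, zero_mul] using panIntegral_zero hempty
  refine le_antisymm ?_ (le_panIntegral_const_mul c f)
  calc panIntegral mu (fun x => c * f x)
      = c * (c⁻¹ * panIntegral mu (fun x => c * f x)) := by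
        rw [← mul_assoc, ← ENNReal.coe_mul, mul_inv_cancel₀ hc, ENNReal.coe_one, one_mul]
    _ ≤ c * panIntegral mu (fun x => c⁻¹ * (c * f x)) := by grw [le_panIntegral_const_mul]
    _ = c * panIntegral mu f := by
        simp_rw [← mul_assoc, ← ENNReal.coe_mul, inv_mul_cancel₀ hc, ENNReal.coe_one, one_mul]

end PanValues

section Superadditivity

variable [MeasurableSpace X] {mu : Set X → ℝ≥0∞}

lemma sum_mul_le_sum_mul_of_refines (hmu : MonotoneMeasure mu) (hsub : PanSubadditive mu)
    {ι κ : Type*} [Fintype ι] [Fintype κ] {A : ι → Set X} {B : κ → Set X}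
    (hA : IsMeasurablePartition A) (hB : IsMeasurablePartition B) (g : κ → ι)
    (hg : ∀ k, B k ⊆ A (g k)) (c : ι → ℝ≥0∞) :
    ∑ i, c i * mu (A i) ≤ ∑ k, c (g k) * mu (B k) := by
  classical
  have hcover : ∀ i, A i ⊆ ⋃ k ∈ ({k | g k = i} : Finset κ), B k := fun i x hx => by
    obtain ⟨k, hk⟩ := hB.exists_mem x
    exact mem_biUnion (Finset.mem_filter.mpr ⟨Finset.mem_univ k, hA.eq_of_mem (hg k hk) hx⟩) hk
  calc ∑ i, c i * mu (A i) ≤ ∑ i, ∑ k ∈ {k | g k = i}, c i * mu (B k) := by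
        refine Finset.sum_le_sum fun i _ => ?_
        rw [← Finset.mul_sum]
        gcongr
        exact (hmu.mono (hA.measurableSet i) (Finset.measurableSet_biUnion _
          fun k _ => hB.measurableSet k) (hcover i)).trans
          (hsub.measure_biUnion_finset_le hmu.empty hB.measurableSet _)
    _ = ∑ i, ∑ k ∈ {k | g k = i}, c (g k) * mu (B k) :=
        Finset.sum_congr rfl fun i _ => Finset.sum_congr rfl fun k hk => by
          rw [(Finset.mem_filter.mp hk).2]
    _ = ∑ k, c (g k) * mu (B k) := Finset.sum_fiberwise _ g _

lemma panIntegral_add_panIntegral_le (hmu : MonotoneMeasure mu) (hsub : PanSubadditive mu)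
    (f g : X → ℝ≥0∞) :
    panIntegral mu f + panIntegral mu g ≤ panIntegral mu (fun x => f x + g x) := by
  rw [panIntegral_eq_sSup_panValues f, panIntegral_eq_sSup_panValues g, sSup_eq_iSup,
    sSup_eq_iSup]
  refine ENNReal.biSup_add_biSup_le (panValues_nonempty f) (panValues_nonempty g) ?_
  rintro _ ⟨n, A, lam, hA, hlam, rfl⟩ _ ⟨m, C, kap, hC, hkap, rfl⟩
  have hB := hA.inter fun _ => hC
  calc ∑ i, (lam i : ℝ≥0∞) * mu (A i) + ∑ j, (kap j : ℝ≥0∞) * mu (C j)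
      ≤ ∑ p : Fin n × Fin m, (lam p.1 : ℝ≥0∞) * mu (A p.1 ∩ C p.2)
        + ∑ p : Fin n × Fin m, (kap p.2 : ℝ≥0∞) * mu (A p.1 ∩ C p.2) :=
        add_le_add
          (sum_mul_le_sum_mul_of_refines hmu hsub hA hB Prod.fst (fun _ => inter_subset_left) _)
          (sum_mul_le_sum_mul_of_refines hmu hsub hC hB Prod.snd (fun _ => inter_subset_right) _)
    _ = ∑ p : Fin n × Fin m, ((lam p.1 + kap p.2 : ℝ≥0) : ℝ≥0∞) * mu (A p.1 ∩ C p.2) := by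
        simp only [ENNReal.coe_add, add_mul, Finset.sum_add_distrib]
    _ ≤ panIntegral mu (fun x => f x + g x) :=
        sum_le_panIntegral hB fun p x hx => by
          rw [ENNReal.coe_add]; exact add_le_add (hlam _ x hx.1) (hkap _ x hx.2)

end Superadditivity

lemma le_of_forall_one_sub_inv_mul_le {a b : ℝ≥0∞}
    (h : ∀ N : ℕ, N ≠ 0 → ((1 - (N : ℝ≥0)⁻¹ : ℝ≥0) : ℝ≥0∞) * a ≤ b) : a ≤ b := by
  refine ENNReal.le_of_forall_lt_one_mul_le fun t ht => ?_
  lift t to ℝ≥0 using ne_top_of_lt ht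
  obtain ⟨n, hn⟩ := exists_nat_one_div_lt (tsub_pos_of_lt (ENNReal.coe_lt_one_iff.mp ht))
  refine le_trans ?_ (h (n + 1) n.succ_ne_zero)
  gcongr
  rw [Nat.cast_succ, ← one_div]
  exact le_tsub_of_add_le_right (lt_tsub_iff_left.mp hn).le

open scoped Classical in
noncomputable def gridFloor (N : ℕ) (δ : ℝ≥0) (y : ℝ≥0∞) : Fin (N + 1) :=
  ⟨Nat.findGreatest (fun k => ((k * δ : ℝ≥0) : ℝ≥0∞) ≤ y) N,
    Nat.lt_succ_of_le (Nat.findGreatest_le N)⟩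

section GridFloor

variable {N : ℕ} {δ : ℝ≥0} {y : ℝ≥0∞}

lemma gridFloor_mul_le : (((gridFloor N δ y : ℕ) * δ : ℝ≥0) : ℝ≥0∞) ≤ y :=
  Nat.findGreatest_spec (P := fun k => ((k * δ : ℝ≥0) : ℝ≥0∞) ≤ y) (Nat.zero_le N) (by simp)

lemma lt_gridFloor_add_one_mul (h : (gridFloor N δ y : ℕ) < N) :
    y < ((((gridFloor N δ y : ℕ) + 1) * δ : ℝ≥0) : ℝ≥0∞) := by
  have := Nat.findGreatest_is_greatest (P := fun k => ((k * δ : ℝ≥0) : ℝ≥0∞) ≤ y)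
    (Nat.lt_succ_self _) h
  push_cast at this ⊢
  exact not_le.mp this

lemma monotone_gridFloor : Monotone (gridFloor N δ) := fun _ _ h =>
  Fin.mk_le_mk.mpr (Nat.findGreatest_mono_left (fun _ hk => hk.trans h) N)

lemma measurable_gridFloor : Measurable (gridFloor N δ) :=
  monotone_gridFloor.measurable

lemma tsub_gridFloor_add_one_mul_le {c : ℝ≥0} (hc : c ≤ N * δ) {z : ℝ≥0∞} (h : c ≤ y + z) :
    ((c - ((gridFloor N δ y : ℕ) + 1) * δ : ℝ≥0) : ℝ≥0∞) ≤ z := by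
  rw [ENNReal.coe_sub, tsub_le_iff_left]
  rcases lt_or_ge (gridFloor N δ y : ℕ) N with hlt | hge
  · exact h.trans (add_le_add_left (lt_gridFloor_add_one_mul hlt).le z)
  · refine le_add_right (ENNReal.coe_le_coe.mpr (hc.trans ?_))
    gcongr
    exact_mod_cast hge.trans (Nat.le_succ _)

end GridFloor

section Subadditivity

variable [MeasurableSpace X] {mu : Set X → ℝ≥0∞}

lemma one_sub_inv_mul_sum_le_panIntegral_add (hmu : MonotoneMeasure mu)
    (hsub : PanSubadditive mu) {f g : X → ℝ≥0∞} (hf : Measurable f) {N : ℕ} (hN : N ≠ 0)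
    {ι : Type*} [Fintype ι] {A : ι → Set X} {lam : ι → ℝ≥0} (hA : IsMeasurablePartition A)
    (hlam : ∀ i, ∀ x ∈ A i, (lam i : ℝ≥0∞) ≤ f x + g x) :
    ((1 - (N : ℝ≥0)⁻¹ : ℝ≥0) : ℝ≥0∞) * ∑ i, (lam i : ℝ≥0∞) * mu (A i) ≤
      panIntegral mu f + panIntegral mu g := by
  set δ : ι → ℝ≥0 := fun i => lam i / N
  set R : ι × Fin (N + 1) → Set X := fun p => A p.1 ∩ (gridFloor N (δ p.1) ∘ f) ⁻¹' {p.2}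
  have hR : IsMeasurablePartition R :=
    hA.inter fun _ => .preimage_singleton (measurable_gridFloor.comp hf)
  set a : ι × Fin (N + 1) → ℝ≥0 := fun p => (p.2 : ℕ) * δ p.1
  set b : ι × Fin (N + 1) → ℝ≥0 := fun p => lam p.1 - ((p.2 : ℕ) + 1) * δ p.1
  have ha : ∀ p, ∀ x ∈ R p, (a p : ℝ≥0∞) ≤ f x := by
    rintro ⟨i, k⟩ x ⟨-, hk⟩
    obtain rfl : gridFloor N (δ i) (f x) = k := hk
    exact gridFloor_mul_le
  have hb : ∀ p, ∀ x ∈ R p, (b p : ℝ≥0∞) ≤ g x := by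
    rintro ⟨i, k⟩ x ⟨hx, hk⟩
    obtain rfl : gridFloor N (δ i) (f x) = k := hk
    exact tsub_gridFloor_add_one_mul_le (mul_div_cancel₀ _ (Nat.cast_ne_zero.mpr hN)).ge
      (hlam i x hx)
  have hab : ∀ p, (1 - (N : ℝ≥0)⁻¹) * lam p.1 ≤ a p + b p := fun p => by
    rw [tsub_mul, one_mul, inv_mul_eq_div, tsub_le_iff_right, add_right_comm, ← add_one_mul]
    exact le_add_tsub
  calc ((1 - (N : ℝ≥0)⁻¹ : ℝ≥0) : ℝ≥0∞) * ∑ i, (lam i : ℝ≥0∞) * mu (A i)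
      ≤ ((1 - (N : ℝ≥0)⁻¹ : ℝ≥0) : ℝ≥0∞) * ∑ p, (lam p.1 : ℝ≥0∞) * mu (R p) := by
        gcongr
        exact sum_mul_le_sum_mul_of_refines hmu hsub hA hR Prod.fst
          (fun _ => inter_subset_left) _
    _ ≤ ∑ p, ((a p + b p : ℝ≥0) : ℝ≥0∞) * mu (R p) := by
        rw [Finset.mul_sum]
        refine Finset.sum_le_sum fun p _ => ?_
        rw [← mul_assoc, ← ENNReal.coe_mul]
        gcongr
        exact hab p
    _ = ∑ p, (a p : ℝ≥0∞) * mu (R p) + ∑ p, (b p : ℝ≥0∞) * mu (R p) := by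
        simp only [ENNReal.coe_add, add_mul, Finset.sum_add_distrib]
    _ ≤ panIntegral mu f + panIntegral mu g :=
        add_le_add (sum_le_panIntegral hR ha) (sum_le_panIntegral hR hb)

lemma panIntegral_add_le (hmu : MonotoneMeasure mu) (hsub : PanSubadditive mu)
    {f : X → ℝ≥0∞} (hf : Measurable f) (g : X → ℝ≥0∞) :
    panIntegral mu (fun x => f x + g x) ≤ panIntegral mu f + panIntegral mu g := by
  rw [panIntegral_eq_sSup_panValues]
  refine sSup_le ?_
  rintro _ ⟨n, A, lam, hA, hlam, rfl⟩
  exact le_of_forall_one_sub_inv_mul_le fun N hN =>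
    one_sub_inv_mul_sum_le_panIntegral_add hmu hsub hf hN hA hlam

end Subadditivity

lemma panIntegral_add [MeasurableSpace X] {mu : Set X → ℝ≥0∞} (hmu : MonotoneMeasure mu)
    (hsub : PanSubadditive mu) {f : X → ℝ≥0∞} (hf : Measurable f) (g : X → ℝ≥0∞) :
    panIntegral mu (fun x => f x + g x) = panIntegral mu f + panIntegral mu g :=
  (panIntegral_add_le hmu hsub hf g).antisymm (panIntegral_add_panIntegral_le hmu hsub f g)

lemma ofReal_add_add_ofReal_neg_add_ofReal_neg (r s : ℝ) :
    ENNReal.ofReal (r + s) + (ENNReal.ofReal (-r) + ENNReal.ofReal (-s)) =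
      ENNReal.ofReal (-(r + s)) + (ENNReal.ofReal r + ENNReal.ofReal s) := by
  simp only [ENNReal.ofReal, ← ENNReal.coe_add, ENNReal.coe_inj, ← NNReal.coe_inj,
    NNReal.coe_add, Real.coe_toNNReal']
  rcases le_total 0 r with hr | hr <;> rcases le_total 0 s with hs | hs <;>
    rcases le_total 0 (r + s) with hrs | hrs <;>
    simp only [max_eq_left, max_eq_right, hr, hs, hrs, neg_nonneg, neg_nonpos] <;> linarith

section RealValued

variable [MeasurableSpace X] {mu : Set X → ℝ≥0∞} {u v : X → ℝ}

lemma PanIntegrable.neg (hu : PanIntegrable mu u) : PanIntegrable mu (fun x => -u x) := by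
  simpa only [PanIntegrable, neg_neg, and_comm] using hu

lemma panIntegralReal_neg (u : X → ℝ) :
    panIntegralReal mu (fun x => -u x) = -panIntegralReal mu u := by
  simp only [panIntegralReal, neg_neg, neg_sub]

lemma panIntegral_ofReal_const_mul (hempty : mu ∅ = 0) {a : ℝ} (ha : 0 ≤ a) (u : X → ℝ) :
    panIntegral mu (fun x => ENNReal.ofReal (a * u x)) =
      ENNReal.ofReal a * panIntegral mu (fun x => ENNReal.ofReal (u x)) := by
  simp_rw [ENNReal.ofReal_mul ha]
  exact panIntegral_const_mul hempty _ _

lemma PanIntegrable.const_mul_of_nonneg (hempty : mu ∅ = 0) (hu : PanIntegrable mu u) {a : ℝ}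
    (ha : 0 ≤ a) : PanIntegrable mu (fun x => a * u x) := by
  refine ⟨?_, ?_⟩
  · rw [panIntegral_ofReal_const_mul hempty ha]
    exact ENNReal.mul_lt_top ENNReal.ofReal_lt_top hu.1
  · simp_rw [← mul_neg]
    rw [panIntegral_ofReal_const_mul hempty ha]
    exact ENNReal.mul_lt_top ENNReal.ofReal_lt_top hu.2

lemma PanIntegrable.const_mul (hempty : mu ∅ = 0) (hu : PanIntegrable mu u) (a : ℝ) :
    PanIntegrable mu (fun x => a * u x) := by
  rcases le_total 0 a with ha | ha
  · exact hu.const_mul_of_nonneg hempty ha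
  · simpa only [neg_mul_neg] using hu.neg.const_mul_of_nonneg hempty (neg_nonneg.mpr ha)

lemma panIntegralReal_const_mul_of_nonneg (hempty : mu ∅ = 0) {a : ℝ} (ha : 0 ≤ a)
    (u : X → ℝ) : panIntegralReal mu (fun x => a * u x) = a * panIntegralReal mu u := by
  simp only [panIntegralReal, ← mul_neg]
  rw [panIntegral_ofReal_const_mul hempty ha, panIntegral_ofReal_const_mul hempty ha,
    ENNReal.toReal_mul, ENNReal.toReal_mul, ENNReal.toReal_ofReal ha, mul_sub]

lemma panIntegralReal_const_mul (hempty : mu ∅ = 0) (a : ℝ) (u : X → ℝ) :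
    panIntegralReal mu (fun x => a * u x) = a * panIntegralReal mu u := by
  rcases le_total 0 a with ha | ha
  · exact panIntegralReal_const_mul_of_nonneg hempty ha u
  · simpa only [neg_mul_neg, panIntegralReal_neg] using
      panIntegralReal_const_mul_of_nonneg hempty (neg_nonneg.mpr ha) (fun x => -u x)

lemma PanIntegrable.add (hmu : MonotoneMeasure mu) (hsub : PanSubadditive mu)
    (hu : Measurable u) (hui : PanIntegrable mu u) (hvi : PanIntegrable mu v) :
    PanIntegrable mu (fun x => u x + v x) := by
  refine ⟨?_, ?_⟩
  · calc panIntegral mu (fun x => ENNReal.ofReal (u x + v x))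
        ≤ panIntegral mu (fun x => ENNReal.ofReal (u x) + ENNReal.ofReal (v x)) :=
          panIntegral_mono fun x => ENNReal.ofReal_add_le
      _ < ⊤ := by
          rw [panIntegral_add hmu hsub hu.ennreal_ofReal]
          exact ENNReal.add_lt_top.mpr ⟨hui.1, hvi.1⟩
  · calc panIntegral mu (fun x => ENNReal.ofReal (-(u x + v x)))
        ≤ panIntegral mu (fun x => ENNReal.ofReal (-u x) + ENNReal.ofReal (-v x)) :=
          panIntegral_mono fun x => (neg_add (u x) (v x)).symm ▸ ENNReal.ofReal_add_le
      _ < ⊤ := by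
          rw [panIntegral_add hmu hsub (f := fun x => ENNReal.ofReal (-u x))
            hu.neg.ennreal_ofReal]
          exact ENNReal.add_lt_top.mpr ⟨hui.2, hvi.2⟩

lemma panIntegralReal_add (hmu : MonotoneMeasure mu) (hsub : PanSubadditive mu)
    (hu : Measurable u) (hv : Measurable v) (hui : PanIntegrable mu u)
    (hvi : PanIntegrable mu v) :
    panIntegralReal mu (fun x => u x + v x) = panIntegralReal mu u + panIntegralReal mu v := by
  have huvi := hui.add hmu hsub hu hvi
  have key : panIntegral mu (fun x => ENNReal.ofReal (u x + v x)) +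
        (panIntegral mu (fun x => ENNReal.ofReal (-u x)) +
          panIntegral mu (fun x => ENNReal.ofReal (-v x))) =
      panIntegral mu (fun x => ENNReal.ofReal (-(u x + v x))) +
        (panIntegral mu (fun x => ENNReal.ofReal (u x)) +
          panIntegral mu (fun x => ENNReal.ofReal (v x))) := by
    rw [← panIntegral_add hmu hsub (f := fun x => ENNReal.ofReal (-u x)) hu.neg.ennreal_ofReal,
      ← panIntegral_add hmu hsub (f := fun x => ENNReal.ofReal (u x + v x))
        (hu.add hv).ennreal_ofReal,
      ← panIntegral_add hmu hsub (f := fun x => ENNReal.ofReal (u x)) hu.ennreal_ofReal,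
      ← panIntegral_add hmu hsub (f := fun x => ENNReal.ofReal (-(u x + v x)))
        (hu.add hv).neg.ennreal_ofReal]
    simp_rw [ofReal_add_add_ofReal_neg_add_ofReal_neg]
  have := congrArg ENNReal.toReal key
  rw [ENNReal.toReal_add huvi.1.ne (ENNReal.add_lt_top.mpr ⟨hui.2, hvi.2⟩).ne,
    ENNReal.toReal_add huvi.2.ne (ENNReal.add_lt_top.mpr ⟨hui.1, hvi.1⟩).ne,
    ENNReal.toReal_add hui.2.ne hvi.2.ne, ENNReal.toReal_add hui.1.ne hvi.1.ne] at this
  simp only [panIntegralReal]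
  linarith

end RealValued

theorem panIntegralReal_linear [MeasurableSpace X]
    (mu : Set X → ℝ≥0∞) (hmu : MonotoneMeasure mu) (hsub : PanSubadditive mu)
    (f g : X → ℝ) (hf : Measurable f) (hg : Measurable g)
    (hfi : PanIntegrable mu f) (hgi : PanIntegrable mu g) (a b : ℝ) :
    PanIntegrable mu (fun x => a * f x + b * g x) ∧
      panIntegralReal mu (fun x => a * f x + b * g x) =
        a * panIntegralReal mu f + b * panIntegralReal mu g := by
  have hafi := hfi.const_mul hmu.empty a
  have hbgi := hgi.const_mul hmu.empty b
  refine ⟨hafi.add hmu hsub (hf.const_mul a) hbgi, ?_⟩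
  rw [panIntegralReal_add hmu hsub (hf.const_mul a) (hg.const_mul b) hafi hbgi,
    panIntegralReal_const_mul hmu.empty, panIntegralReal_const_mul hmu.empty]
end

section
/- Let (X, 𝒜, μ) be a monotone measure space with μ subadditive, E ∈ 𝒜, and p ≥ 1. Then the pan-integrable p-th power space L^p_μ(E) = { f : E → ℝ measurable : (∫_E^pan |f|^p dμ)^{1/p} < ∞ } is a linear space: for all f, g ∈ L^p_μ(E) and all α, β ∈ ℝ, αf + βg ∈ L^p_μ(E). -/
open Set Filter
open scoped ENNReal NNReal Topology

variable {X : Type*}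

lemma le_panIntegral [MeasurableSpace X] (mu : Set X → ℝ≥0∞) {u : X → ℝ≥0∞} {n : ℕ}
    {A : Fin n → Set X} (hA : IsPanPartition A) (lam : Fin n → ℝ≥0)
    (hle : ∀ x, ∑ i, Set.indicator (A i) (fun _ => (lam i : ℝ≥0∞)) x ≤ u x) :
    ∑ i, (lam i : ℝ≥0∞) * mu (A i) ≤ panIntegral mu u :=
  le_iSup_of_le n <| le_iSup_of_le A <| le_iSup_of_le hA <| le_iSup_of_le lam <|
    le_iSup_of_le hle le_rfl

lemma panIntegral_le [MeasurableSpace X] {mu : Set X → ℝ≥0∞} {u : X → ℝ≥0∞} {C : ℝ≥0∞}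
    (h : ∀ (n : ℕ) (A : Fin n → Set X), IsPanPartition A → ∀ lam : Fin n → ℝ≥0,
      (∀ x, ∑ i, Set.indicator (A i) (fun _ => (lam i : ℝ≥0∞)) x ≤ u x) →
      ∑ i, (lam i : ℝ≥0∞) * mu (A i) ≤ C) :
    panIntegral mu u ≤ C := by
  refine iSup_le fun n => iSup_le fun A => iSup_le fun hA => iSup_le fun lam =>
    iSup_le fun hle => h n A hA lam hle

lemma panIntegral_smul_le [MeasurableSpace X] (mu : Set X → ℝ≥0∞) (u : X → ℝ≥0∞)
    {c : ℝ≥0} (hc : c ≠ 0) :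
    panIntegral mu (fun x => (c : ℝ≥0∞) * u x) ≤ c * panIntegral mu u := by
  refine panIntegral_le fun n A hA lam hle => ?_
  have key : ∀ x, ∑ i, Set.indicator (A i) (fun _ => ((lam i * c⁻¹ : ℝ≥0) : ℝ≥0∞)) x ≤ u x := by
    intro x
    have h1 : ∀ i, Set.indicator (A i) (fun _ => ((lam i * c⁻¹ : ℝ≥0) : ℝ≥0∞)) x
        = Set.indicator (A i) (fun _ => (lam i : ℝ≥0∞)) x * (c : ℝ≥0∞)⁻¹ := by
      intro i
      by_cases hx : x ∈ A i <;> simp [Set.indicator, hx, ENNReal.coe_mul, ENNReal.coe_inv hc]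
    rw [Finset.sum_congr rfl fun i _ => h1 i, ← Finset.sum_mul]
    calc (∑ i, Set.indicator (A i) (fun _ => (lam i : ℝ≥0∞)) x) * (c : ℝ≥0∞)⁻¹
        ≤ ((c : ℝ≥0∞) * u x) * (c : ℝ≥0∞)⁻¹ := by gcongr; exact hle x
      _ = u x := by
          rw [mul_comm (c : ℝ≥0∞) (u x), mul_assoc,
            ENNReal.mul_inv_cancel (by exact_mod_cast hc) ENNReal.coe_ne_top, mul_one]
  have := le_panIntegral mu hA (fun i => lam i * c⁻¹) key
  calc ∑ i, (lam i : ℝ≥0∞) * mu (A i)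
      = c * ∑ i, ((lam i * c⁻¹ : ℝ≥0) : ℝ≥0∞) * mu (A i) := by
        rw [Finset.mul_sum]
        refine Finset.sum_congr rfl fun i _ => ?_
        rw [ENNReal.coe_mul, ENNReal.coe_inv hc, ← mul_assoc, ← mul_assoc,
          mul_comm ((c : ℝ≥0∞)) ((lam i : ℝ≥0∞)), mul_assoc ((lam i : ℝ≥0∞)) ((c : ℝ≥0∞)),
          ENNReal.mul_inv_cancel (by exact_mod_cast hc) ENNReal.coe_ne_top, mul_one]
    _ ≤ c * panIntegral mu u := by gcongr

lemma panIntegral_piece [MeasurableSpace X] {mu : Set X → ℝ≥0∞} (hsub : PanSubadditive mu)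
    {S : Set X} (hS : MeasurableSet S) {u : X → ℝ≥0∞} {n : ℕ} {A : Fin n → Set X}
    (hA : IsPanPartition A) (lam : Fin n → ℝ≥0)
    (hle : ∀ x ∈ S, ∑ i, Set.indicator (A i) (fun _ => (lam i : ℝ≥0∞)) x ≤ u x) :
    ∑ i, (lam i : ℝ≥0∞) * mu (A i ∩ S) ≤ panIntegral mu u := by
  set A1 : Fin (n + 1) → Set X := Fin.cons Sᶜ (fun i => A i ∩ S) with hA1
  set lam1 : Fin (n + 1) → ℝ≥0 := Fin.cons 0 lam with hlam1
  have hpart : IsPanPartition A1 := by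
    refine ⟨?_, ?_, ?_⟩
    · intro i
      induction i using Fin.cases with
      | zero => simpa [A1] using hS.compl
      | succ i => simpa [A1] using (hA.1 i).inter hS
    · intro i j hij
      induction i using Fin.cases with
      | zero =>
        induction j using Fin.cases with
        | zero => exact absurd rfl hij
        | succ j =>
          simp only [Function.onFun, A1, Fin.cons_zero, Fin.cons_succ]
          exact disjoint_compl_left.mono_right Set.inter_subset_right
      | succ i =>
        induction j using Fin.cases with
        | zero =>
          simp only [Function.onFun, A1, Fin.cons_zero, Fin.cons_succ]
          exact (disjoint_compl_right.mono_left Set.inter_subset_right)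
        | succ j =>
          have hij' : i ≠ j := fun h => hij (by rw [h])
          simp only [Function.onFun, A1, Fin.cons_succ]
          exact (hA.2.1 hij').mono Set.inter_subset_left Set.inter_subset_left
    · rw [Set.eq_univ_iff_forall]
      intro x
      by_cases hx : x ∈ S
      · have : x ∈ ⋃ i, A i := hA.2.2 ▸ Set.mem_univ x
        obtain ⟨i, hi⟩ := Set.mem_iUnion.1 this
        exact Set.mem_iUnion.2 ⟨i.succ, by simp [A1, Fin.cons_succ]; exact ⟨hi, hx⟩⟩
      · exact Set.mem_iUnion.2 ⟨0, by simpa [A1] using hx⟩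
  have hle1 : ∀ x, ∑ i, Set.indicator (A1 i) (fun _ => (lam1 i : ℝ≥0∞)) x ≤ u x := by
    intro x
    rw [Fin.sum_univ_succ]
    have h0 : Set.indicator (A1 0) (fun _ => ((lam1 0 : ℝ≥0) : ℝ≥0∞)) x = 0 := by
      simp [A1, lam1, Set.indicator]
    rw [h0, zero_add]
    simp only [A1, lam1, Fin.cons_succ]
    by_cases hx : x ∈ S
    · have : ∀ i : Fin n, Set.indicator (A i ∩ S) (fun _ => (lam i : ℝ≥0∞)) x
          = Set.indicator (A i) (fun _ => (lam i : ℝ≥0∞)) x := by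
        intro i
        by_cases hxa : x ∈ A i <;> simp [Set.indicator, hxa, hx]
      rw [Finset.sum_congr rfl fun i _ => this i]
      exact hle x hx
    · have : ∀ i : Fin n, Set.indicator (A i ∩ S) (fun _ => (lam i : ℝ≥0∞)) x = 0 := by
        intro i; exact Set.indicator_of_notMem (fun h => hx h.2) _
      rw [Finset.sum_congr rfl fun i _ => this i]
      simp
  have := le_panIntegral mu hpart lam1 hle1
  calc ∑ i, (lam i : ℝ≥0∞) * mu (A i ∩ S)
      = ∑ i, (lam1 i : ℝ≥0∞) * mu (A1 i) := by
        rw [Fin.sum_univ_succ]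
        simp [A1, lam1]
    _ ≤ panIntegral mu u := this

lemma panIntegral_split [MeasurableSpace X] {mu : Set X → ℝ≥0∞} (hsub : PanSubadditive mu)
    {S : Set X} (hS : MeasurableSet S) {w u v : X → ℝ≥0∞}
    (hu : ∀ x ∈ S, w x ≤ u x) (hv : ∀ x ∉ S, w x ≤ v x) :
    panIntegral mu w ≤ panIntegral mu u + panIntegral mu v := by
  refine panIntegral_le fun n A hA lam hle => ?_
  have h1 := panIntegral_piece hsub hS hA lam (fun x hx => (hle x).trans (hu x hx))
  have h2 := panIntegral_piece hsub hS.compl hA lam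
    (fun x hx => (hle x).trans (hv x hx))
  calc ∑ i, (lam i : ℝ≥0∞) * mu (A i)
      ≤ ∑ i, (lam i : ℝ≥0∞) * (mu (A i ∩ S) + mu (A i ∩ Sᶜ)) := by
        refine Finset.sum_le_sum fun i _ => ?_
        gcongr
        have h := hsub ((hA.1 i).inter hS) ((hA.1 i).inter hS.compl)
        rwa [Set.inter_union_compl] at h
    _ = (∑ i, (lam i : ℝ≥0∞) * mu (A i ∩ S)) + ∑ i, (lam i : ℝ≥0∞) * mu (A i ∩ Sᶜ) := by
        rw [← Finset.sum_add_distrib]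
        exact Finset.sum_congr rfl fun i _ => mul_add _ _ _
    _ ≤ panIntegral mu u + panIntegral mu v := add_le_add h1 h2

theorem panLp_linear_space [MeasurableSpace X]
    (mu : Set X → ℝ≥0∞) (hmu : MonotoneMeasure mu) (hsub : PanSubadditive mu)
    {E : Set X} (hE : MeasurableSet E) (p : ℝ) (hp : 1 ≤ p)
    (f g : X → ℝ) (hf : Measurable f) (hg : Measurable g)
    (hfp : panNorm mu E p f < ⊤) (hgp : panNorm mu E p g < ⊤) (a b : ℝ) :
    panNorm mu E p (fun x => a * f x + b * g x) < ⊤ := by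
  have hp0 : (0 : ℝ) < p := lt_of_lt_of_le one_pos hp
  have hpinv : (0 : ℝ) < 1 / p := by positivity
  have hIf : panIntegralOn mu (fun x => ENNReal.ofReal (|f x| ^ p)) E < ⊤ := by
    have h := hfp
    rw [panNorm, ENNReal.rpow_lt_top_iff_of_pos hpinv] at h
    exact h
  have hIg : panIntegralOn mu (fun x => ENNReal.ofReal (|g x| ^ p)) E < ⊤ := by
    have h := hgp
    rw [panNorm, ENNReal.rpow_lt_top_iff_of_pos hpinv] at h
    exact h
  set c : ℝ≥0 := ((|a| + |b|) ^ p).toNNReal + 1 with hc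
  have hcne : c ≠ 0 := by simp [hc]
  have hct : ENNReal.ofReal ((|a| + |b|) ^ p) ≤ (c : ℝ≥0∞) := by
    rw [hc, ENNReal.coe_add, ENNReal.coe_one]
    exact le_self_add
  -- pointwise bound
  have hpt : ∀ r s u v : ℝ, |r| + |s| = |a| + |b| → |v| ≤ |u| →
      ENNReal.ofReal (|r * u + s * v| ^ p) ≤ (c : ℝ≥0∞) * ENNReal.ofReal (|u| ^ p) := by
    intro r s u v hrs huv
    have h1 : |r * u + s * v| ≤ (|a| + |b|) * |u| := by
      calc |r * u + s * v| ≤ |r * u| + |s * v| := abs_add_le _ _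
        _ = |r| * |u| + |s| * |v| := by rw [abs_mul, abs_mul]
        _ ≤ |r| * |u| + |s| * |u| := by gcongr
        _ = (|r| + |s|) * |u| := by ring
        _ = (|a| + |b|) * |u| := by rw [hrs]
    have h2 : |r * u + s * v| ^ p ≤ ((|a| + |b|) * |u|) ^ p :=
      Real.rpow_le_rpow (abs_nonneg _) h1 hp0.le
    rw [Real.mul_rpow (by positivity) (abs_nonneg _)] at h2
    calc ENNReal.ofReal (|r * u + s * v| ^ p)
        ≤ ENNReal.ofReal ((|a| + |b|) ^ p * |u| ^ p) := ENNReal.ofReal_le_ofReal h2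
      _ = ENNReal.ofReal ((|a| + |b|) ^ p) * ENNReal.ofReal (|u| ^ p) :=
          ENNReal.ofReal_mul (by positivity)
      _ ≤ (c : ℝ≥0∞) * ENNReal.ofReal (|u| ^ p) := mul_le_mul_left hct _
  set S : Set X := {x | |g x| ≤ |f x|} with hSdef
  have hS : MeasurableSet S := measurableSet_le hg.abs hf.abs
  set w : X → ℝ≥0∞ := E.indicator (fun x => ENNReal.ofReal (|a * f x + b * g x| ^ p)) with hw
  set uf : X → ℝ≥0∞ :=
    fun x => (c : ℝ≥0∞) * E.indicator (fun x => ENNReal.ofReal (|f x| ^ p)) x with huf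
  set ug : X → ℝ≥0∞ :=
    fun x => (c : ℝ≥0∞) * E.indicator (fun x => ENNReal.ofReal (|g x| ^ p)) x with hug
  have hwu : ∀ x ∈ S, w x ≤ uf x := by
    intro x hx
    by_cases hxE : x ∈ E
    · simp only [hw, huf, Set.indicator_of_mem hxE]
      exact hpt a b (f x) (g x) rfl hx
    · simp [hw, huf, Set.indicator_of_notMem hxE]
  have hwv : ∀ x ∉ S, w x ≤ ug x := by
    intro x hx
    have hx' : |f x| ≤ |g x| := le_of_not_ge hx
    by_cases hxE : x ∈ E
    · simp only [hw, hug, Set.indicator_of_mem hxE]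
      calc ENNReal.ofReal (|a * f x + b * g x| ^ p)
          = ENNReal.ofReal (|b * g x + a * f x| ^ p) := by rw [add_comm]
        _ ≤ (c : ℝ≥0∞) * ENNReal.ofReal (|g x| ^ p) :=
            hpt b a (g x) (f x) (add_comm _ _) hx'
    · simp [hw, hug, Set.indicator_of_notMem hxE]
  have key : panIntegral mu w ≤ panIntegral mu uf + panIntegral mu ug :=
    panIntegral_split hsub hS hwu hwv
  have hfin : panIntegral mu w < ⊤ := by
    refine lt_of_le_of_lt key ?_
    have h1 : panIntegral mu uf ≤ c * panIntegralOn mu (fun x => ENNReal.ofReal (|f x| ^ p)) E :=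
      panIntegral_smul_le mu _ hcne
    have h2 : panIntegral mu ug ≤ c * panIntegralOn mu (fun x => ENNReal.ofReal (|g x| ^ p)) E :=
      panIntegral_smul_le mu _ hcne
    refine lt_of_le_of_lt (add_le_add h1 h2) ?_
    exact ENNReal.add_lt_top.2 ⟨ENNReal.mul_lt_top ENNReal.coe_lt_top hIf,
      ENNReal.mul_lt_top ENNReal.coe_lt_top hIg⟩
  rw [panNorm]
  exact ENNReal.rpow_lt_top_of_nonneg hpinv.le (ne_of_lt hfin)
end
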